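/- Let ν be a probability distribution on {0,1}^n and c > 0 such that Σ_{x∈{0,1}^n} ν(x)² ≤ c·2^{−n}. Let ε > 0 and f : {0,1}^n → {0,1} satisfy E_ν[f] − E_U[f] ≥ ε, and set L = {x : f(x) = 1}. Let U(L) denote the uniform distribution on L. Then: (i) E_{x∼U(L)}[ν(x)] = ν(L)/|L| ≥ (1+ε)/2^n, equivalently the linear cross-entropy fidelity F_XEB(U(L)) = 2^n·E_{x∼U(L)}[ν(x)] − 1 ≥ ε, so samples from U(L) fool the heavy output generation benchmark XHOG up to ε; and (ii) a sample drawn from the uniform distribution on {0,1}^n lies in L with probability |L|/2^n ≥ ε²/c, so rejection sampling of U(L) by drawing uniform strings and accepting exactly those x with f(x) = 1 accepts each trial with probability at least ε²/c. -/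
import Mathlib


open Finset

noncomputable section

/-- Expectation of `f` under a distribution `μ` on a finite type. -/
def expect {S : Type*} [Fintype S] (μ f : S → ℝ) : ℝ := ∑ x, μ x * f x

/-- `μ` is a probability distribution on the finite type `S`. -/
def IsProbDist {S : Type*} [Fintype S] (μ : S → ℝ) : Prop :=
  (∀ x, 0 ≤ μ x) ∧ ∑ x, μ x = 1

/-- The uniform distribution on `{0,1}^n`. -/
def uniformBn (n : ℕ) : (Fin n → Bool) → ℝ := fun _ => ((2 : ℝ) ^ n)⁻¹

/-- From distinguishing to fooling XHOG: sampling uniformly from the acceptance set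
`L = {x : f(x) = 1}` of a binary test distinguishing `ν` from uniform yields mean
target probability at least `(1+ε)/2^n` (linear XEB fidelity at least `ε`), and
rejection sampling of `U(L)` from uniform proposals accepts each trial with
probability `|L|/2^n ≥ ε²/c`. -/
theorem distinguishing_fools_XHOG (n : ℕ)
    (ν : (Fin n → Bool) → ℝ) (hν : IsProbDist ν)
    (c : ℝ) (hc : 0 < c) (hcol : ∑ x, ν x ^ 2 ≤ c / 2 ^ n)
    (ε : ℝ) (hε : 0 < ε)
    (f : (Fin n → Bool) → ℝ) (hbin : ∀ x, f x = 0 ∨ f x = 1)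
    (hsep : expect ν f - expect (uniformBn n) f ≥ ε)
    (L : Finset (Fin n → Bool)) (hLdef : ∀ x, x ∈ L ↔ f x = 1) :
    ((∑ x ∈ L, ν x) / L.card ≥ (1 + ε) / 2 ^ n ∧
        (2 : ℝ) ^ n * ((∑ x ∈ L, ν x) / L.card) - 1 ≥ ε) ∧
      (L.card : ℝ) / 2 ^ n ≥ ε ^ 2 / c := by
  have hpow : (0:ℝ) < 2 ^ n := by positivity
  have hL1 : ∀ x ∈ L, f x = 1 := fun x hx => (hLdef x).1 hx
  have hL0 : ∀ x, x ∉ L → f x = 0 := fun x hx =>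
    (hbin x).resolve_right (fun h => hx ((hLdef x).2 h))
  have hEν : _root_.expect ν f = ∑ x ∈ L, ν x := by
    rw [_root_.expect, ← Finset.sum_subset (Finset.subset_univ L)
      (fun x _ hx => by rw [hL0 x hx, mul_zero])]
    exact Finset.sum_congr rfl fun x hx => by rw [hL1 x hx, mul_one]
  have hEU : _root_.expect (uniformBn n) f = (L.card : ℝ) / 2 ^ n := by
    rw [_root_.expect, ← Finset.sum_subset (Finset.subset_univ L)
      (fun x _ hx => by rw [uniformBn, hL0 x hx, mul_zero])]
    rw [Finset.sum_congr rfl fun x hx => by rw [uniformBn, hL1 x hx, mul_one]]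
    simp [div_eq_mul_inv]
  have hkey : (∑ x ∈ L, ν x) - (L.card : ℝ) / 2 ^ n ≥ ε := by
    rw [← hEν, ← hEU]; exact hsep
  have hcardnn : (0:ℝ) ≤ (L.card : ℝ) := Nat.cast_nonneg _
  have hνL : (∑ x ∈ L, ν x) ≥ ε := by
    have : (0:ℝ) ≤ (L.card : ℝ) / 2 ^ n := by positivity
    linarith
  have hLpos : (0:ℝ) < (L.card : ℝ) := by
    rcases Nat.eq_zero_or_pos L.card with h | h
    · exfalso
      have : L = ∅ := Finset.card_eq_zero.mp h
      rw [this] at hνL; simp at hνL; linarith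
    · exact_mod_cast h
  have hcardle : (L.card : ℝ) ≤ 2 ^ n := by
    have h0 := Finset.card_le_univ L
    have h2 : (Finset.univ : Finset (Fin n → Bool)).card = 2 ^ n := by
      simp [Fintype.card_fun]
    calc (L.card : ℝ) ≤ ((Finset.univ : Finset (Fin n → Bool)).card : ℝ) := by
          exact_mod_cast h0
      _ = 2 ^ n := by rw [h2]; push_cast; ring
  have hkey' : (L.card : ℝ) + ε * 2 ^ n ≤ (∑ x ∈ L, ν x) * 2 ^ n := by
    have h := mul_le_mul_of_nonneg_right
      (show (L.card : ℝ) / 2 ^ n + ε ≤ ∑ x ∈ L, ν x by linarith) hpow.le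
    rw [add_mul, div_mul_cancel₀ _ (ne_of_gt hpow)] at h
    linarith
  have hεL : ε * (L.card : ℝ) ≤ ε * 2 ^ n := mul_le_mul_of_nonneg_left hcardle hε.le
  have h1 : (∑ x ∈ L, ν x) / L.card ≥ (1 + ε) / 2 ^ n := by
    rw [ge_iff_le, div_le_div_iff₀ hpow hLpos]
    nlinarith
  refine ⟨⟨h1, ?_⟩, ?_⟩
  · have h4 := (div_le_div_iff₀ hpow hLpos).mp h1
    have h2 : (1 + ε) ≤ 2 ^ n * ((∑ x ∈ L, ν x) / L.card) := by
      rw [← mul_div_assoc, le_div_iff₀ hLpos]; nlinarith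
    linarith
  · have hcs : (∑ x ∈ L, ν x) ^ 2 ≤ (L.card : ℝ) * ∑ x ∈ L, ν x ^ 2 :=
      sq_sum_le_card_mul_sum_sq
    have hsub : (∑ x ∈ L, ν x ^ 2) ≤ ∑ x, ν x ^ 2 :=
      Finset.sum_le_sum_of_subset_of_nonneg (Finset.subset_univ L)
        (fun x _ _ => sq_nonneg _)
    have h3 : (∑ x ∈ L, ν x) ^ 2 ≤ (L.card : ℝ) * (c / 2 ^ n) := by
      calc (∑ x ∈ L, ν x) ^ 2 ≤ (L.card : ℝ) * ∑ x ∈ L, ν x ^ 2 := hcs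
        _ ≤ (L.card : ℝ) * (c / 2 ^ n) :=
          mul_le_mul_of_nonneg_left (le_trans hsub hcol) hcardnn
    have h3' : (∑ x ∈ L, ν x) ^ 2 * 2 ^ n ≤ (L.card : ℝ) * c := by
      have h := mul_le_mul_of_nonneg_right h3 hpow.le
      rw [mul_assoc, div_mul_cancel₀ _ (ne_of_gt hpow)] at h
      linarith
    have hsq : ε ^ 2 ≤ (∑ x ∈ L, ν x) ^ 2 := pow_le_pow_left₀ hε.le hνL 2
    have := mul_le_mul_of_nonneg_right hsq hpow.le
    rw [ge_iff_le, div_le_div_iff₀ hc hpow]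
    linarith
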